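/- arXiv:1901.04326 — 3 statements merged into one kernel-verified Lean document; each statement's English description precedes it below -/
import Mathlib

section
/- Let X, Y and A be measurable spaces, μ a probability measure on X (the prior), η a Markov kernel from X to Y (the observation distribution), ν the induced marginal probability measure on Y, and κ a Markov kernel from Y to X (the posterior) satisfying the disintegration identity ∫_X ∫_Y f(x,y) dη_x(y) dμ(x) = ∫_Y ∫_X f(x,y) dκ_y(x) dν(y) for every bounded measurable f : X × Y → ℝ. Let ℓ : X × A → ℝ be a bounded measurable loss function. For a measurable decision rule d : Y → A define the Bayes risk BR(d) = ∫_X ∫_Y ℓ(x, d(y)) dη_x(y) dμ(x), and for each y ∈ Y define the set of Bayes acts A*(y) = {a ∈ A : ∫_X ℓ(x,a) dκ_y(x) ≤ ∫_X ℓ(x,a') dκ_y(x) for all a' ∈ A}. Assume there exists a measurable map d° : Y → A with d°(y) ∈ A*(y) for every y ∈ Y. Then a measurable decision rule d* : Y → A minimizes BR over all measurable decision rules if and only if d*(y) ∈ A*(y) for ν-almost all y ∈ Y. -/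
/-!
By the disintegration identity, the Bayes risk of `d` is the `ν`-integral of its posterior risk
`y ↦ ∫ ℓ(x, d y) dκ_y(x)`. The posterior risk of the rule `d₀` of Bayes acts lies pointwise below
that of every rule, so `d*` minimises the Bayes risk iff its posterior risk has the same integral
as that of `d₀`, iff the two posterior risks agree `ν`-a.e., i.e. iff `d* y` is a Bayes act for
`ν`-almost every `y`.
-/

open MeasureTheory ProbabilityTheory

/-- The Bayes risk of a decision rule `d : Y → A`. -/
noncomputable def BayesRisk {X Y A : Type*} [MeasurableSpace X] [MeasurableSpace Y]
    (μ : Measure X) (η : Kernel X Y) (ℓ : X × A → ℝ) (d : Y → A) : ℝ :=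
  ∫ x, ∫ y, ℓ (x, d y) ∂(η x) ∂μ

/-- The set of Bayes acts at an observation `y`, under posterior kernel `κ`. -/
def BayesActs {X Y A : Type*} [MeasurableSpace X] [MeasurableSpace Y]
    (κ : Kernel Y X) (ℓ : X × A → ℝ) (y : Y) : Set A :=
  {a : A | ∀ a' : A, ∫ x, ℓ (x, a) ∂(κ y) ≤ ∫ x, ℓ (x, a') ∂(κ y)}

section PosteriorRisk

variable {X Y A : Type*} [MeasurableSpace X] [MeasurableSpace Y]

noncomputable def posteriorRisk (κ : Kernel Y X) (ℓ : X × A → ℝ) (d : Y → A) (y : Y) : ℝ :=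
  ∫ x, ℓ (x, d y) ∂(κ y)

variable {κ : Kernel Y X} {ℓ : X × A → ℝ}

theorem measurable_posteriorRisk [MeasurableSpace A] [IsSFiniteKernel κ] {d : Y → A}
    (hℓ : Measurable ℓ) (hd : Measurable d) : Measurable (posteriorRisk κ ℓ d) :=
  (hℓ.comp (measurable_snd.prodMk (hd.comp measurable_fst))).stronglyMeasurable
    |>.integral_kernel_prod_right'.measurable

theorem norm_posteriorRisk_le [IsMarkovKernel κ] {C : ℝ} (hC : ∀ p, |ℓ p| ≤ C) (d : Y → A)
    (y : Y) : ‖posteriorRisk κ ℓ d y‖ ≤ C := by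
  simpa [posteriorRisk] using norm_integral_le_of_norm_le_const (μ := κ y) (f := fun x => ℓ (x, d y))
    (ae_of_all _ fun x => hC (x, d y))

theorem integrable_posteriorRisk [MeasurableSpace A] [IsMarkovKernel κ] (ν : Measure Y)
    [IsFiniteMeasure ν] {C : ℝ} (hℓ : Measurable ℓ) (hC : ∀ p, |ℓ p| ≤ C) {d : Y → A}
    (hd : Measurable d) : Integrable (posteriorRisk κ ℓ d) ν :=
  .of_bound (measurable_posteriorRisk hℓ hd).aestronglyMeasurable C
    (ae_of_all _ (norm_posteriorRisk_le hC d))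

theorem posteriorRisk_le_of_forall_mem_bayesActs {d₀ : Y → A}
    (hd₀ : ∀ y, d₀ y ∈ BayesActs κ ℓ y) (d : Y → A) :
    posteriorRisk κ ℓ d₀ ≤ posteriorRisk κ ℓ d :=
  fun y => hd₀ y (d y)

theorem mem_bayesActs_of_posteriorRisk_le {d₀ d : Y → A} {y : Y}
    (hd₀ : d₀ y ∈ BayesActs κ ℓ y) (h : posteriorRisk κ ℓ d y ≤ posteriorRisk κ ℓ d₀ y) :
    d y ∈ BayesActs κ ℓ y :=
  fun a' => h.trans (hd₀ a')

theorem bayesRisk_eq_integral_posteriorRisk [MeasurableSpace A] {μ : Measure X}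
    {η : Kernel X Y} {ν : Measure Y}
    (hdis : ∀ f : X × Y → ℝ, Measurable f → (∃ C, ∀ p, |f p| ≤ C) →
      ∫ x, ∫ y, f (x, y) ∂(η x) ∂μ = ∫ y, ∫ x, f (x, y) ∂(κ y) ∂ν)
    {C : ℝ} (hℓ : Measurable ℓ) (hC : ∀ p, |ℓ p| ≤ C) {d : Y → A} (hd : Measurable d) :
    BayesRisk μ η ℓ d = ∫ y, posteriorRisk κ ℓ d y ∂ν :=
  hdis (fun p => ℓ (p.1, d p.2)) (hℓ.comp (measurable_fst.prodMk (hd.comp measurable_snd)))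
    ⟨C, fun _ => hC _⟩

end PosteriorRisk

theorem bayes_rule_iff_ae_bayes_act_general
    {X Y A : Type*} [MeasurableSpace X] [MeasurableSpace Y] [MeasurableSpace A]
    (μ : Measure X)
    (η : Kernel X Y)
    (ν : Measure Y) [IsProbabilityMeasure ν]
    (κ : Kernel Y X) [IsMarkovKernel κ]
    (hdis : ∀ f : X × Y → ℝ, Measurable f → (∃ C, ∀ p, |f p| ≤ C) →
      ∫ x, ∫ y, f (x, y) ∂(η x) ∂μ = ∫ y, ∫ x, f (x, y) ∂(κ y) ∂ν)
    (ℓ : X × A → ℝ) (hℓ : Measurable ℓ) (hℓbound : ∃ C, ∀ p, |ℓ p| ≤ C)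
    (d₀ : Y → A) (hd₀ : Measurable d₀) (hd₀act : ∀ y, d₀ y ∈ BayesActs κ ℓ y)
    (dstar : Y → A) (hdstar : Measurable dstar) :
    (∀ d : Y → A, Measurable d → BayesRisk μ η ℓ dstar ≤ BayesRisk μ η ℓ d) ↔
      (∀ᵐ y ∂ν, dstar y ∈ BayesActs κ ℓ y) := by
  obtain ⟨C, hC⟩ := hℓbound
  have hBR {d : Y → A} (hd : Measurable d) := bayesRisk_eq_integral_posteriorRisk hdis hℓ hC hd
  have hint {d : Y → A} (hd : Measurable d) := integrable_posteriorRisk (κ := κ) ν hℓ hC hd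
  constructor
  · intro hmin
    have hle := posteriorRisk_le_of_forall_mem_bayesActs hd₀act dstar
    have heq : posteriorRisk κ ℓ d₀ =ᵐ[ν] posteriorRisk κ ℓ dstar := by
      refine (integral_eq_iff_of_ae_le (hint hd₀) (hint hdstar) (ae_of_all _ hle)).1 ?_
      refine le_antisymm (integral_mono (hint hd₀) (hint hdstar) hle) ?_
      simpa only [hBR hd₀, hBR hdstar] using hmin d₀ hd₀
    filter_upwards [heq] with y hy
    exact mem_bayesActs_of_posteriorRisk_le (hd₀act y) hy.ge
  · intro hae d hd
    rw [hBR hdstar, hBR hd]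
    exact integral_mono_ae (hint hdstar) (hint hd) (hae.mono fun y hy => hy (d y))

theorem bayes_rule_iff_ae_bayes_act
    {X Y A : Type*} [MeasurableSpace X] [MeasurableSpace Y] [MeasurableSpace A]
    (μ : Measure X) [IsProbabilityMeasure μ]
    (η : Kernel X Y) [IsMarkovKernel η]
    (ν : Measure Y) [IsProbabilityMeasure ν]
    (κ : Kernel Y X) [IsMarkovKernel κ]
    (hdis : ∀ f : X × Y → ℝ, Measurable f → (∃ C, ∀ p, |f p| ≤ C) →
      ∫ x, ∫ y, f (x, y) ∂(η x) ∂μ = ∫ y, ∫ x, f (x, y) ∂(κ y) ∂ν)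
    (ℓ : X × A → ℝ) (hℓ : Measurable ℓ) (hℓbound : ∃ C, ∀ p, |ℓ p| ≤ C)
    (d₀ : Y → A) (hd₀ : Measurable d₀) (hd₀act : ∀ y, d₀ y ∈ BayesActs κ ℓ y)
    (dstar : Y → A) (hdstar : Measurable dstar) :
    (∀ d : Y → A, Measurable d → BayesRisk μ η ℓ dstar ≤ BayesRisk μ η ℓ d) ↔
      (∀ᵐ y ∂ν, dstar y ∈ BayesActs κ ℓ y) :=
  bayes_rule_iff_ae_bayes_act_general μ η ν κ hdis ℓ hℓ hℓbound d₀ hd₀ hd₀act dstar hdstar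
end

section
/- Let π be a probability measure on ℝ^d and let φ : ℝ^d → ℝ^m be a continuous map with ∫ ‖φ(x)‖₂² dπ(x) < ∞. If φ is coercive (for every c > 0 there is a compact set K ⊂ ℝ^d with ‖φ(x)‖₂ ≥ c for all x ∉ K), then the function f : ℝ^d → ℝ defined by f(a) = ∫ ‖φ(x) − φ(a)‖₂² dπ(x) is coercive, i.e. f(a) → ∞ as ‖a‖₂ → ∞. -/
open MeasureTheory Filter

/-- If `φ` is continuous, square-integrable and coercive, then
`f(a) = ∫ ‖φ(x) − φ(a)‖² dπ(x)` is coercive: `f(a) → ∞` as `‖a‖ → ∞`. -/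
theorem expected_sq_loss_coercive
    {d m : ℕ} (π : Measure (EuclideanSpace ℝ (Fin d))) [IsProbabilityMeasure π]
    (φ : EuclideanSpace ℝ (Fin d) → EuclideanSpace ℝ (Fin m))
    (hφcont : Continuous φ)
    (hint : Integrable (fun x => ‖φ x‖ ^ 2) π)
    (hcoercive : ∀ c > 0, ∃ K : Set (EuclideanSpace ℝ (Fin d)),
      IsCompact K ∧ ∀ x ∉ K, c ≤ ‖φ x‖) :
    Tendsto (fun a => ∫ x, ‖φ x - φ a‖ ^ 2 ∂π)
      (Filter.comap (fun a : EuclideanSpace ℝ (Fin d) => ‖a‖) atTop) atTop := by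
  set C : ℝ := ∫ x, ‖φ x‖ ^ 2 ∂π with hC
  -- integrability of the shifted squared norm
  have hIa : ∀ a, Integrable (fun x => ‖φ x - φ a‖ ^ 2) π := by
    intro a
    have hb : Integrable (fun x => 2 * ‖φ x‖ ^ 2 + 2 * ‖φ a‖ ^ 2) π :=
      (hint.const_mul 2).add (integrable_const _)
    refine hb.mono ?_ ?_
    · exact ((hφcont.sub continuous_const).norm.pow 2).aestronglyMeasurable
    · filter_upwards with x
      have h1 : ‖φ x - φ a‖ ≤ ‖φ x‖ + ‖φ a‖ := norm_sub_le _ _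
      have h2 : (0:ℝ) ≤ ‖φ x - φ a‖ := norm_nonneg _
      have h3 : (0:ℝ) ≤ ‖φ x‖ := norm_nonneg _
      have h4 : (0:ℝ) ≤ ‖φ a‖ := norm_nonneg _
      simp only [Real.norm_eq_abs]
      rw [abs_of_nonneg (by positivity), abs_of_nonneg (by positivity)]
      nlinarith [sq_nonneg (‖φ x‖ - ‖φ a‖), sq_nonneg (‖φ x‖ + ‖φ a‖), mul_self_nonneg ‖φ x - φ a‖]
  -- the key lower bound
  have hlb : ∀ a, ‖φ a‖ ^ 2 / 2 - C ≤ ∫ x, ‖φ x - φ a‖ ^ 2 ∂π := by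
    intro a
    have hmono : ∫ x, (‖φ a‖ ^ 2 / 2 - ‖φ x‖ ^ 2) ∂π ≤ ∫ x, ‖φ x - φ a‖ ^ 2 ∂π := by
      refine integral_mono ((integrable_const _).sub hint) (hIa a) ?_
      intro x
      have h1 : ‖φ a‖ ≤ ‖φ x - φ a‖ + ‖φ x‖ := by
        calc ‖φ a‖ = ‖φ a - φ x + φ x‖ := by rw [sub_add_cancel]
          _ ≤ ‖φ a - φ x‖ + ‖φ x‖ := norm_add_le _ _
          _ = ‖φ x - φ a‖ + ‖φ x‖ := by rw [norm_sub_rev]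
      have h2 : (0:ℝ) ≤ ‖φ x - φ a‖ := norm_nonneg _
      have h3 : (0:ℝ) ≤ ‖φ x‖ := norm_nonneg _
      dsimp only
      nlinarith [sq_nonneg (‖φ x - φ a‖ - ‖φ x‖), mul_self_le_mul_self (norm_nonneg (φ a)) h1]
    have heq : ∫ x, (‖φ a‖ ^ 2 / 2 - ‖φ x‖ ^ 2) ∂π = ‖φ a‖ ^ 2 / 2 - C := by
      rw [integral_sub (integrable_const _) hint, integral_const, probReal_univ]
      simp [hC]
    linarith [hmono, heq ▸ hmono]
  -- φ tends to infinity in norm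
  have hφtend : Tendsto (fun a => ‖φ a‖)
      (Filter.comap (fun a : EuclideanSpace ℝ (Fin d) => ‖a‖) atTop) atTop := by
    rw [tendsto_atTop]
    intro c
    obtain ⟨K, hK, hKc⟩ := hcoercive (max c 1) (lt_of_lt_of_le one_pos (le_max_right c 1))
    obtain ⟨R, hR⟩ := hK.isBounded.subset_ball 0
    have hnorm : Tendsto (fun a : EuclideanSpace ℝ (Fin d) => ‖a‖)
        (Filter.comap (fun a : EuclideanSpace ℝ (Fin d) => ‖a‖) atTop) atTop :=
      tendsto_comap
    filter_upwards [hnorm.eventually (eventually_gt_atTop R)] with a ha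
    have haK : a ∉ K := by
      intro h
      have := hR h
      simp [Metric.mem_ball, dist_zero_right] at this
      linarith
    exact le_trans (le_max_left c 1) (hKc a haK)
  -- conclude
  have hcomp : Tendsto (fun a => ‖φ a‖ ^ 2 / 2 - C)
      (Filter.comap (fun a : EuclideanSpace ℝ (Fin d) => ‖a‖) atTop) atTop := by
    have h1 : Tendsto (fun t : ℝ => t ^ 2 / 2 - C) atTop atTop := by
      have := (tendsto_pow_atTop (two_ne_zero)).atTop_div_const (by norm_num : (0:ℝ) < 2)
      simpa [sub_eq_add_neg] using tendsto_atTop_add_const_right atTop (-C) this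
    exact h1.comp hφtend
  exact tendsto_atTop_mono hlb hcomp
end

section
/- Let (X, μ) be a probability space that admits a measurable partition S₁, S₂, S₃ with π₁ = μ(S₁), π₂ = μ(S₂), π₃ = μ(S₃) all strictly positive and π₁ ≤ π₂ ≤ π₃. Consider the dichotomy 0–1 loss ℓ(x,x') = 1_{1_{S₁}(x) ≠ 1_{S₁}(x')} on states and the corresponding 0–1 loss ℓ(x,a) = 1_{1_{S₁}(x) ≠ a} on binary actions a ∈ {0,1}. Then there exist measurable observation maps y₁, y₂ : X → {0,1} such that the two experiments have equal minimal Bayes risk, min_{d : {0,1}→{0,1}} μ({x : d(y₁(x)) ≠ 1_{S₁}(x)}) = min_{d : {0,1}→{0,1}} μ({x : d(y₂(x)) ≠ 1_{S₁}(x)}), but different BPN criteria: ∫_X μ({x' : 1_{S₁}(x') ≠ 1_{S₁}(x)} | {x'' : y₁(x'') = y₁(x)}) dμ(x) ≠ ∫_X μ({x' : 1_{S₁}(x') ≠ 1_{S₁}(x)} | {x'' : y₂(x'') = y₂(x)}) dμ(x). Consequently, the set of experiments in {y₁, y₂} optimal under the Bayes risk criterion differs from the set optimal under the BPN criterion. 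-/
open MeasureTheory ProbabilityTheory

private lemma integral_tripart {X : Type*} [MeasurableSpace X] (μ : Measure X)
    [IsFiniteMeasure μ] {S₁ S₂ S₃ : Set X} (h₁ : MeasurableSet S₁) (h₂ : MeasurableSet S₂)
    (h₃ : MeasurableSet S₃) (r₁ r₂ r₃ : ℝ) (f : X → ℝ)
    (hf : ∀ x, f x = S₁.indicator (fun _ => r₁) x + S₂.indicator (fun _ => r₂) x
      + S₃.indicator (fun _ => r₃) x) :
    ∫ x, f x ∂μ = (μ S₁).toReal * r₁ + (μ S₂).toReal * r₂ + (μ S₃).toReal * r₃ := by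
  have i₁ : Integrable (S₁.indicator (fun _ => r₁)) μ := (integrable_const r₁).indicator h₁
  have i₂ : Integrable (S₂.indicator (fun _ => r₂)) μ := (integrable_const r₂).indicator h₂
  have i₃ : Integrable (S₃.indicator (fun _ => r₃)) μ := (integrable_const r₃).indicator h₃
  have i₁₂ : Integrable (fun x => S₁.indicator (fun _ => r₁) x
      + S₂.indicator (fun _ => r₂) x) μ := i₁.add i₂
  rw [integral_congr_ae (Filter.Eventually.of_forall hf),
    integral_add i₁₂ i₃, integral_add i₁ i₂,
    integral_indicator_const r₁ h₁, integral_indicator_const r₂ h₂,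
    integral_indicator_const r₃ h₃]
  simp [smul_eq_mul, measureReal_def]

/-- Given a partition `S₁, S₂, S₃` of positive measure with `μ S₁ ≤ μ S₂ ≤ μ S₃`, there
exist two binary experiments with equal minimal Bayes risk (under the 0–1 loss for
deciding membership of `S₁`) but different BPN criteria (under the dichotomy 0–1 loss);
hence BDT-optimality and BPN-optimality differ. -/
theorem exists_experiments_equal_risk_different_bpn
    {X : Type*} [MeasurableSpace X] (μ : Measure X) [IsProbabilityMeasure μ]
    (S₁ S₂ S₃ : Set X)
    (hS₁ : MeasurableSet S₁) (hS₂ : MeasurableSet S₂) (hS₃ : MeasurableSet S₃)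
    (hd₁₂ : Disjoint S₁ S₂) (hd₁₃ : Disjoint S₁ S₃) (hd₂₃ : Disjoint S₂ S₃)
    (hcover : S₁ ∪ S₂ ∪ S₃ = Set.univ)
    (hπ₁ : 0 < μ S₁) (hπ₂ : 0 < μ S₂) (hπ₃ : 0 < μ S₃)
    (hord₁₂ : μ S₁ ≤ μ S₂) (hord₂₃ : μ S₂ ≤ μ S₃) :
    ∃ y₁ y₂ : X → Bool, Measurable y₁ ∧ Measurable y₂ ∧
      (sInf {r : ℝ | ∃ d : Bool → Bool,
            r = (μ {x | ¬(d (y₁ x) = true ↔ x ∈ S₁)}).toReal}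
        = sInf {r : ℝ | ∃ d : Bool → Bool,
            r = (μ {x | ¬(d (y₂ x) = true ↔ x ∈ S₁)}).toReal}) ∧
      (∫ x, ((μ[|{x'' | y₁ x'' = y₁ x}]) {x' | ¬(x' ∈ S₁ ↔ x ∈ S₁)}).toReal ∂μ
        ≠ ∫ x, ((μ[|{x'' | y₂ x'' = y₂ x}]) {x' | ¬(x' ∈ S₁ ↔ x ∈ S₁)}).toReal ∂μ) := by
  classical
  -- membership facts
  have hmem : ∀ x : X, x ∈ S₁ ∨ x ∈ S₂ ∨ x ∈ S₃ := by
    intro x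
    have : x ∈ S₁ ∪ S₂ ∪ S₃ := hcover.symm ▸ Set.mem_univ x
    simpa [Set.mem_union, or_assoc] using this
  have h12 : ∀ x, x ∈ S₁ → x ∉ S₂ := fun x hx => Set.disjoint_left.mp hd₁₂ hx
  have h13 : ∀ x, x ∈ S₁ → x ∉ S₃ := fun x hx => Set.disjoint_left.mp hd₁₃ hx
  have h21 : ∀ x, x ∈ S₂ → x ∉ S₁ := fun x hx => Set.disjoint_right.mp hd₁₂ hx
  have h23 : ∀ x, x ∈ S₂ → x ∉ S₃ := fun x hx => Set.disjoint_left.mp hd₂₃ hx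
  have h31 : ∀ x, x ∈ S₃ → x ∉ S₁ := fun x hx => Set.disjoint_right.mp hd₁₃ hx
  have h32 : ∀ x, x ∈ S₃ → x ∉ S₂ := fun x hx => Set.disjoint_right.mp hd₂₃ hx
  -- measure facts
  have hfin : ∀ s : Set X, μ s ≠ ⊤ := fun s => measure_ne_top μ s
  have hcompl1 : S₁ᶜ = S₂ ∪ S₃ := by
    ext x
    rcases hmem x with hx | hx | hx
    · simp [hx, h12 _ hx, h13 _ hx]
    · simp [hx, h21 _ hx]
    · simp [hx, h31 _ hx]
  have hcompl3 : S₃ᶜ = S₁ ∪ S₂ := by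
    ext x
    rcases hmem x with hx | hx | hx
    · simp [hx, h13 _ hx]
    · simp [hx, h23 _ hx]
    · simp [hx, h31 _ hx, h32 _ hx]
  have hμc1 : μ S₁ᶜ = μ S₂ + μ S₃ := by rw [hcompl1, measure_union hd₂₃ hS₃]
  have hμc3 : μ S₃ᶜ = μ S₁ + μ S₂ := by rw [hcompl3, measure_union hd₁₂ hS₂]
  have hsumE : μ S₁ + μ S₂ + μ S₃ = 1 := by
    rw [← measure_union hd₁₂ hS₂, ← measure_union (hd₁₃.union_left hd₂₃) hS₃, hcover,
      measure_univ]
  -- the two experiments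
  refine ⟨fun x => if x ∈ S₃ then true else false, fun _ => false,
    Measurable.ite hS₃ measurable_const measurable_const, measurable_const, ?_, ?_⟩
  · -- equal Bayes risks: both sInf equal (μ S₁).toReal
    have hle_c1 : (μ S₁).toReal ≤ (μ S₁ᶜ).toReal := by
      apply ENNReal.toReal_le_toReal (hfin _) (hfin _) |>.mpr
      calc μ S₁ ≤ μ S₂ := hord₁₂
        _ ≤ μ S₂ + μ S₃ := le_self_add
        _ = μ S₁ᶜ := hμc1.symm
    have e1 : sInf {r : ℝ | ∃ d : Bool → Bool,
        r = (μ {x | ¬(d (if x ∈ S₃ then true else false) = true ↔ x ∈ S₁)}).toReal}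
        = (μ S₁).toReal := by
      apply IsLeast.csInf_eq
      constructor
      · exact ⟨fun _ => false, by simp⟩
      · rintro r ⟨d, rfl⟩
        cases hdf : d false <;> cases hdt : d true
        · -- d ≡ false : set = S₁
          have hset : {x | ¬(d (if x ∈ S₃ then true else false) = true ↔ x ∈ S₁)} = S₁ := by
            ext x; by_cases hx : x ∈ S₃ <;> simp [hx, hdf, hdt]
          rw [hset]
        · -- d = id : set = S₁ ∪ S₃
          have hset : {x | ¬(d (if x ∈ S₃ then true else false) = true ↔ x ∈ S₁)}
              = S₁ ∪ S₃ := by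
            ext x
            rcases hmem x with hx | hx | hx
            · simp [hx, h13 _ hx, hdf]
            · simp [hx, h21 _ hx, h23 _ hx, hdf]
            · simp [hx, h31 _ hx, hdt]
          rw [hset, measure_union hd₁₃ hS₃]
          exact (ENNReal.toReal_le_toReal (hfin _)
            (ENNReal.add_ne_top.mpr ⟨hfin _, hfin _⟩)).mpr le_self_add
        · -- d = not : set = S₂
          have hset : {x | ¬(d (if x ∈ S₃ then true else false) = true ↔ x ∈ S₁)} = S₂ := by
            ext x
            rcases hmem x with hx | hx | hx
            · simp [hx, h13 _ hx, h12 _ hx, hdf]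
            · simp [hx, h21 _ hx, h23 _ hx, hdf]
            · simp [hx, h31 _ hx, h32 _ hx, hdt]
          rw [hset]
          exact ENNReal.toReal_le_toReal (hfin _) (hfin _) |>.mpr hord₁₂
        · -- d ≡ true : set = S₁ᶜ
          have hset : {x | ¬(d (if x ∈ S₃ then true else false) = true ↔ x ∈ S₁)} = S₁ᶜ := by
            ext x; by_cases hx : x ∈ S₃ <;> simp [hx, hdf, hdt]
          rw [hset]; exact hle_c1
    have e2 : sInf {r : ℝ | ∃ d : Bool → Bool,
        r = (μ {x | ¬(d false = true ↔ x ∈ S₁)}).toReal} = (μ S₁).toReal := by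
      apply IsLeast.csInf_eq
      constructor
      · exact ⟨fun _ => false, by simp⟩
      · rintro r ⟨d, rfl⟩
        cases hdf : d false
        · have hset : {x : X | ¬(false = true ↔ x ∈ S₁)} = S₁ := by
            ext x; simp
          rw [hset]
        · have hset : {x : X | ¬(true = true ↔ x ∈ S₁)} = S₁ᶜ := by
            ext x; simp
          rw [hset]; exact hle_c1
    rw [e1, e2]
  · -- BPN criteria differ
    set a := (μ S₁).toReal with ha
    set b := (μ S₂).toReal with hb
    set c := (μ S₃).toReal with hc
    have hpa : 0 < a := ENNReal.toReal_pos hπ₁.ne' (hfin _)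
    have hpb : 0 < b := ENNReal.toReal_pos hπ₂.ne' (hfin _)
    have hpc : 0 < c := ENNReal.toReal_pos hπ₃.ne' (hfin _)
    have hsum : a + b + c = 1 := by
      have := congrArg ENNReal.toReal hsumE
      rwa [ENNReal.toReal_add (ENNReal.add_ne_top.mpr ⟨hfin _, hfin _⟩) (hfin _),
        ENNReal.toReal_add (hfin _) (hfin _), ENNReal.toReal_one] at this
    -- compute the first integral
    have class3 : ∀ x ∈ S₃,
        {x'' | (if x'' ∈ S₃ then true else false) = (if x ∈ S₃ then true else false)} = S₃ := by
      intro x hx; ext x''; by_cases h : x'' ∈ S₃ <;> simp [h, hx]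
    have class12 : ∀ x, x ∉ S₃ →
        {x'' | (if x'' ∈ S₃ then true else false) = (if x ∈ S₃ then true else false)} = S₃ᶜ := by
      intro x hx; ext x''; by_cases h : x'' ∈ S₃ <;> simp [h, hx]
    have dis1 : ∀ x ∈ S₁, {x' | ¬(x' ∈ S₁ ↔ x ∈ S₁)} = S₁ᶜ := by
      intro x hx; ext x'; simp [hx]
    have dis0 : ∀ x, x ∉ S₁ → {x' | ¬(x' ∈ S₁ ↔ x ∈ S₁)} = S₁ := by
      intro x hx; ext x'; simp [hx]
    have hc3S1c : S₃ᶜ ∩ S₁ᶜ = S₂ := by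
      rw [hcompl3, hcompl1]
      ext x
      rcases hmem x with hx | hx | hx
      · simp [hx, h12 _ hx, h13 _ hx]
      · simp [hx, h23 _ hx]
      · simp [hx, h31 _ hx, h32 _ hx]
    have hc3S1 : S₃ᶜ ∩ S₁ = S₁ := by
      rw [hcompl3]; ext x; by_cases hx : x ∈ S₁ <;> simp [hx]
    set r : ℝ := ((μ S₃ᶜ)⁻¹ * μ S₂).toReal with hr
    set s : ℝ := ((μ S₃ᶜ)⁻¹ * μ S₁).toReal with hs
    have I₁ : (∫ x, ((μ[|{x'' | (if x'' ∈ S₃ then true else false)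
          = (if x ∈ S₃ then true else false)}]) {x' | ¬(x' ∈ S₁ ↔ x ∈ S₁)}).toReal ∂μ)
        = a * r + b * s + c * 0 := by
      apply integral_tripart μ hS₁ hS₂ hS₃
      intro x
      rcases hmem x with hx | hx | hx
      · rw [class12 x (h13 _ hx), dis1 x hx, cond_apply hS₃.compl, hc3S1c]
        simp [Set.indicator_of_mem hx, Set.indicator_of_notMem (h12 _ hx),
          Set.indicator_of_notMem (h13 _ hx), hr]
      · rw [class12 x (h23 _ hx), dis0 x (h21 _ hx), cond_apply hS₃.compl, hc3S1]
        simp [Set.indicator_of_mem hx, Set.indicator_of_notMem (h21 _ hx),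
          Set.indicator_of_notMem (h23 _ hx), hs]
      · rw [class3 x hx, dis0 x (h31 _ hx), cond_apply hS₃]
        have : S₃ ∩ S₁ = ∅ := by
          ext z; simp; intro hz; exact h31 _ hz
        rw [this]
        simp [Set.indicator_of_mem hx, Set.indicator_of_notMem (h31 _ hx),
          Set.indicator_of_notMem (h32 _ hx)]
    have I₂ : (∫ x, ((μ[|{x'' | (false : Bool) = false}]) {x' | ¬(x' ∈ S₁ ↔ x ∈ S₁)}).toReal ∂μ)
        = a * (μ S₁ᶜ).toReal + b * a + c * a := by
      have huniv : {x'' : X | (false : Bool) = false} = Set.univ := by simp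
      apply integral_tripart μ hS₁ hS₂ hS₃
      intro x
      rcases hmem x with hx | hx | hx
      · rw [huniv, cond_univ, dis1 x hx]
        simp [Set.indicator_of_mem hx, Set.indicator_of_notMem (h12 _ hx),
          Set.indicator_of_notMem (h13 _ hx)]
      · rw [huniv, cond_univ, dis0 x (h21 _ hx)]
        simp [Set.indicator_of_mem hx, Set.indicator_of_notMem (h21 _ hx),
          Set.indicator_of_notMem (h23 _ hx), ha]
      · rw [huniv, cond_univ, dis0 x (h31 _ hx)]
        simp [Set.indicator_of_mem hx, Set.indicator_of_notMem (h31 _ hx),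
          Set.indicator_of_notMem (h32 _ hx), ha]
    rw [I₁, I₂]
    -- now pure real arithmetic
    have hab_ne : μ S₃ᶜ ≠ 0 := by
      rw [hμc3]; exact fun h => absurd h (by simp [hπ₁.ne', hπ₂.ne', add_eq_zero])
    have hrval : r = b / (a + b) := by
      rw [hr, ENNReal.toReal_mul, ENNReal.toReal_inv, hμc3,
        ENNReal.toReal_add (hfin _) (hfin _)]
      ring
    have hsval : s = a / (a + b) := by
      rw [hs, ENNReal.toReal_mul, ENNReal.toReal_inv, hμc3,
        ENNReal.toReal_add (hfin _) (hfin _)]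
      ring
    have hc1val : (μ S₁ᶜ).toReal = b + c := by
      rw [hμc1, ENNReal.toReal_add (hfin _) (hfin _)]
    rw [hrval, hsval, hc1val]
    have hab : 0 < a + b := by linarith
    apply ne_of_lt
    have step : a * (b / (a + b)) + b * (a / (a + b)) + c * 0 = 2 * a * b / (a + b) := by
      field_simp; ring
    rw [step, div_lt_iff₀ hab]
    have hcc : c = 1 - a - b := by linarith
    rw [hcc] at hpc ⊢
    nlinarith [mul_pos (mul_pos hpa hpa) hpc]
end
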